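/- Let A = F_p((t)) with the contractive automorphism α(x) = tx. Then the map ε : Aut(A, α) → F_p((t))^×, φ ↦ φ(1), is a group isomorphism from the group of topological group automorphisms of A commuting with α onto the multiplicative group of nonzero Laurent series, with inverse a ↦ (x ↦ a·x). -/

import Mathlib

open scoped Classical

/-- The absolute value on `F_p((t))`: `|x| = p^{-N}` where `N` is the least index with
nonzero coefficient, and `|0| = 0`. -/
noncomputable def labs (p : ℕ) (x : LaurentSeries (ZMod p)) : ℝ :=
  if x = 0 then 0 else (p : ℝ) ^ (-(HahnSeries.order x))

/-- The element `t ∈ F_p((t))`. -/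
noncomputable def tVar (p : ℕ) : LaurentSeries (ZMod p) := HahnSeries.single 1 1

/-- Ultrametric continuity of a map `F_p((t)) → F_p((t))`. -/
def LContinuous (p : ℕ) (f : LaurentSeries (ZMod p) → LaurentSeries (ZMod p)) : Prop :=
  ∀ x, ∀ ε : ℝ, 0 < ε → ∃ δ : ℝ, 0 < δ ∧ ∀ x', labs p (x' - x) < δ → labs p (f x' - f x) < ε

/-- `φ` is an automorphism of the contraction group `(A, α)`, `A = F_p((t))`,
`α(x) = tx`: an additive automorphism, homeomorphic (continuous with continuous
inverse), commuting with `α`. -/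
def IsCtrAut (p : ℕ) (φ : LaurentSeries (ZMod p) ≃+ LaurentSeries (ZMod p)) : Prop :=
  LContinuous p φ ∧ LContinuous p φ.symm ∧ ∀ x, φ (tVar p * x) = tVar p * φ x

/-! An additive `φ` commuting with multiplication by `t` is `𝔽_p`-linear and commutes with
multiplication by every `t ^ n`, `n ∈ ℤ`, so it agrees with `x ↦ φ 1 * x` on all monomials
`c • t ^ n`. Their finite sums approximate every Laurent series to any order, and both maps are
continuous, so they agree everywhere. Conversely, multiplication by `a ≠ 0` commutes with `t`
and is a homeomorphism with inverse multiplication by `a⁻¹`. -/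

open scoped LaurentSeries

section GroupWithZero

variable {G₀ : Type*} [GroupWithZero G₀]

theorem map_zpow_mul_of_map_mul {f : G₀ → G₀} {a : G₀} (ha : a ≠ 0)
    (hf : ∀ x, f (a * x) = a * f x) (n : ℤ) (x : G₀) : f (a ^ n * x) = a ^ n * f x := by
  induction n using Int.induction_on generalizing x with
  | zero => simp
  | succ n ih => rw [add_comm, zpow_one_add₀ ha, mul_assoc, hf, ih, mul_assoc]
  | pred n ih =>
    apply mul_left_cancel₀ ha
    rw [← hf, ← mul_assoc, ← mul_assoc, ← zpow_one_add₀ ha,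
      show 1 + (-(n : ℤ) - 1) = -n by ring, ih]

end GroupWithZero

namespace LaurentSeries

variable {R : Type*} [Ring R]

theorem exists_mem_forall_lt_coeff_sub_eq_zero (G : AddSubgroup R⸨X⸩)
    (hG : ∀ i c, HahnSeries.single i c ∈ G) (x : R⸨X⸩) (n : ℤ) :
    ∃ q ∈ G, ∀ i < n, (x - q).coeff i = 0 := by
  have key : ∀ m ≥ x.order, ∃ q ∈ G, ∀ i < m, (x - q).coeff i = 0 := by
    intro m hm
    induction m, hm using Int.leInduction with
    | base =>
      exact ⟨0, G.zero_mem, fun i hi => by simpa using HahnSeries.coeff_eq_zero_of_lt_order hi⟩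
    | succ m _ ih =>
      obtain ⟨q, hq, hxq⟩ := ih
      refine ⟨q + HahnSeries.single m ((x - q).coeff m), G.add_mem hq (hG _ _), fun i hi => ?_⟩
      rw [← sub_sub, HahnSeries.coeff_sub, HahnSeries.coeff_single]
      rcases (Int.lt_add_one_iff.mp hi).lt_or_eq with hi | rfl
      · rw [hxq i hi, if_neg hi.ne, sub_zero]
      · rw [if_pos rfl, sub_self]
  obtain ⟨q, hq, hxq⟩ := key (max n x.order) (le_max_right _ _)
  exact ⟨q, hq, fun i hi => hxq i (lt_max_of_lt_left hi)⟩

end LaurentSeries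

section Labs

@[simp]
theorem labs_zero (p : ℕ) : labs p 0 = 0 := by simp [labs]

theorem labs_sub_comm (p : ℕ) (x y : (ZMod p)⸨X⸩) :
    labs p (x - y) = labs p (y - x) := by
  rw [← neg_sub]
  simp only [labs, neg_eq_zero, HahnSeries.order_neg]

variable {p : ℕ} [Fact p.Prime]

theorem one_lt_cast_prime : (1 : ℝ) < p := by
  exact_mod_cast (Fact.out : p.Prime).one_lt

theorem labs_pos {x : (ZMod p)⸨X⸩} (hx : x ≠ 0) : 0 < labs p x := by
  rw [labs, if_neg hx]
  exact zpow_pos (zero_lt_one.trans one_lt_cast_prime) _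

theorem labs_nonneg (x : (ZMod p)⸨X⸩) : 0 ≤ labs p x := by
  rcases eq_or_ne x 0 with rfl | hx
  · rw [labs_zero]
  · exact (labs_pos hx).le

theorem labs_mul (x y : (ZMod p)⸨X⸩) : labs p (x * y) = labs p x * labs p y := by
  rcases eq_or_ne x 0 with rfl | hx
  · simp
  rcases eq_or_ne y 0 with rfl | hy
  · simp
  rw [labs, labs, labs, if_neg hx, if_neg hy, if_neg (mul_ne_zero hx hy),
    HahnSeries.order_mul hx hy, neg_add, zpow_add₀ (zero_lt_one.trans one_lt_cast_prime).ne']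

theorem labs_add_le (x y : (ZMod p)⸨X⸩) :
    labs p (x + y) ≤ max (labs p x) (labs p y) := by
  rcases eq_or_ne (x + y) 0 with hxy | hxy
  · rw [hxy, labs_zero]
    exact (labs_nonneg x).trans (le_max_left _ _)
  rcases eq_or_ne x 0 with rfl | hx
  · simp
  rcases eq_or_ne y 0 with rfl | hy
  · simp
  have hord := HahnSeries.min_order_le_order_add hxy
  rw [labs, labs, labs, if_neg hxy, if_neg hx, if_neg hy]
  rcases le_total x.order y.order with h | h
  · rw [min_eq_left h] at hord
    exact le_max_of_le_left (zpow_le_zpow_right₀ one_lt_cast_prime.le (neg_le_neg hord))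
  · rw [min_eq_right h] at hord
    exact le_max_of_le_right (zpow_le_zpow_right₀ one_lt_cast_prime.le (neg_le_neg hord))

theorem labs_add_lt {x y : (ZMod p)⸨X⸩} {ε : ℝ} (hx : labs p x < ε) (hy : labs p y < ε) :
    labs p (x + y) < ε :=
  (labs_add_le x y).trans_lt (max_lt hx hy)

theorem labs_le_zpow_of_coeff_eq_zero {x : (ZMod p)⸨X⸩} {n : ℤ}
    (h : ∀ i < n, x.coeff i = 0) : labs p x ≤ (p : ℝ) ^ (-n) := by
  rcases eq_or_ne x 0 with rfl | hx
  · rw [labs_zero]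
    exact zpow_nonneg (Nat.cast_nonneg p) _
  have hn : n ≤ x.order := by
    by_contra! hlt
    exact HahnSeries.coeff_order_eq_zero.not.mpr hx (h _ hlt)
  rw [labs, if_neg hx]
  exact zpow_le_zpow_right₀ one_lt_cast_prime.le (neg_le_neg hn)

theorem exists_zpow_neg_lt {ε : ℝ} (hε : 0 < ε) : ∃ n : ℤ, (p : ℝ) ^ (-n) < ε := by
  obtain ⟨n, hn⟩ :=
    exists_pow_lt_of_lt_one hε (inv_lt_one_of_one_lt₀ (one_lt_cast_prime (p := p)))
  exact ⟨n, by rwa [zpow_neg, zpow_natCast, ← inv_pow]⟩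

end Labs

section Continuity

variable {p : ℕ} [Fact p.Prime]

theorem lcontinuous_const_mul (a : (ZMod p)⸨X⸩) : LContinuous p (a * ·) := by
  intro x ε hε
  have ha : 0 < labs p a + 1 := by linarith [labs_nonneg a]
  refine ⟨ε / (labs p a + 1), div_pos hε ha, fun x' hx' => ?_⟩
  rw [← mul_sub, labs_mul]
  calc labs p a * labs p (x' - x) ≤ (labs p a + 1) * labs p (x' - x) := by
        nlinarith [labs_nonneg (x' - x)]
    _ < (labs p a + 1) * (ε / (labs p a + 1)) := mul_lt_mul_of_pos_left hx' ha
    _ = ε := mul_div_cancel₀ ε ha.ne'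

theorem eq_of_lcontinuous_of_eqOn {f g : (ZMod p)⸨X⸩ → (ZMod p)⸨X⸩}
    (hf : LContinuous p f) (hg : LContinuous p g) {S : Set ((ZMod p)⸨X⸩)}
    (hfg : S.EqOn f g) {x : (ZMod p)⸨X⸩}
    (hx : ∀ n : ℤ, ∃ q ∈ S, ∀ i < n, (x - q).coeff i = 0) : f x = g x := by
  by_contra hne
  have hε : 0 < labs p (f x - g x) := labs_pos (sub_ne_zero.mpr hne)
  obtain ⟨δf, hδf, hf⟩ := hf x _ hε
  obtain ⟨δg, hδg, hg⟩ := hg x _ hε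
  obtain ⟨n, hn⟩ := exists_zpow_neg_lt (p := p) (lt_min hδf hδg)
  obtain ⟨q, hq, hxq⟩ := hx n
  have hqx : labs p (q - x) < min δf δg := by
    rw [labs_sub_comm]
    exact (labs_le_zpow_of_coeff_eq_zero hxq).trans_lt hn
  have hsplit : f x - g x = (f x - f q) + (g q - g x) := by rw [hfg hq]; ring
  have hlt : labs p ((f x - f q) + (g q - g x)) < labs p (f x - g x) :=
    labs_add_lt (by rw [labs_sub_comm]; exact hf q (hqx.trans_le (min_le_left _ _)))
      (hg q (hqx.trans_le (min_le_right _ _)))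
  rw [← hsplit] at hlt
  exact lt_irrefl _ hlt

end Continuity

section Automorphisms

variable {p : ℕ} [Fact p.Prime]

theorem tVar_ne_zero : tVar p ≠ 0 :=
  HahnSeries.single_ne_zero one_ne_zero

theorem single_eq_smul_tVar_zpow (i : ℤ) (c : ZMod p) :
    HahnSeries.single i c = c • tVar p ^ i := by
  rw [tVar, ← RatFunc.single_zpow]
  ext j
  simp only [HahnSeries.coeff_single, HahnSeries.coeff_smul]
  split_ifs <;> simp

theorem eq_mul_of_lcontinuous_of_map_tVar_mul {F : Type*}
    [FunLike F (ZMod p)⸨X⸩ (ZMod p)⸨X⸩] [AddMonoidHomClass F (ZMod p)⸨X⸩ (ZMod p)⸨X⸩] {φ : F}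
    (hφ : LContinuous p φ)
    (ht : ∀ x, φ (tVar p * x) = tVar p * φ x) (x : (ZMod p)⸨X⸩) :
    φ x = φ 1 * x := by
  have hsingle : ∀ i c,
      HahnSeries.single i c ∈ (φ : _ →+ _).eqLocus (AddMonoidHom.mulLeft (φ 1)) := by
    intro i c
    show φ _ = φ 1 * _
    rw [single_eq_smul_tVar_zpow, ZMod.map_smul, ← mul_one (tVar p ^ i),
      map_zpow_mul_of_map_mul tVar_ne_zero ht, mul_smul_comm, mul_comm, mul_one]
  exact eq_of_lcontinuous_of_eqOn hφ (lcontinuous_const_mul _) (fun q hq => hq)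
    (LaurentSeries.exists_mem_forall_lt_coeff_sub_eq_zero _ hsingle x)

theorem isCtrAut_toAddEquiv₀ {a : (ZMod p)⸨X⸩} (ha : a ≠ 0) :
    IsCtrAut p (DistribMulAction.toAddEquiv₀ _ a ha) :=
  ⟨lcontinuous_const_mul a, lcontinuous_const_mul a⁻¹, fun x => mul_left_comm a (tVar p) x⟩

end Automorphisms

theorem stmt14_general {p : ℕ} [Fact p.Prime] :
    (∀ φ : LaurentSeries (ZMod p) ≃+ LaurentSeries (ZMod p), IsCtrAut p φ →
      φ 1 ≠ 0 ∧ ∀ x, φ x = φ 1 * x) ∧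
    (∀ a : LaurentSeries (ZMod p), a ≠ 0 →
      ∃ φ : LaurentSeries (ZMod p) ≃+ LaurentSeries (ZMod p),
        IsCtrAut p φ ∧ φ 1 = a ∧ ∀ x, φ x = a * x) :=
  ⟨fun φ ⟨hφ, _, ht⟩ => ⟨(map_ne_zero_iff φ φ.injective).mpr one_ne_zero,
      eq_mul_of_lcontinuous_of_map_tVar_mul hφ ht⟩,
    fun a ha => ⟨DistribMulAction.toAddEquiv₀ _ a ha, isCtrAut_toAddEquiv₀ ha, mul_one a,
      fun _ => rfl⟩⟩

/-- The map `ε : Aut(A, α) → F_p((t))ˣ`, `φ ↦ φ(1)`, is a group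
isomorphism onto the multiplicative group of nonzero Laurent series, with inverse
`a ↦ (x ↦ a·x)`: every such automorphism is multiplication by its (nonzero) value at
`1`, and conversely multiplication by any `a ≠ 0` is such an automorphism. -/
theorem stmt14 {p : ℕ} (hp : p.Prime) [Fact p.Prime] :
    (∀ φ : LaurentSeries (ZMod p) ≃+ LaurentSeries (ZMod p), IsCtrAut p φ →
      φ 1 ≠ 0 ∧ ∀ x, φ x = φ 1 * x) ∧
    (∀ a : LaurentSeries (ZMod p), a ≠ 0 →
      ∃ φ : LaurentSeries (ZMod p) ≃+ LaurentSeries (ZMod p),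
        IsCtrAut p φ ∧ φ 1 = a ∧ ∀ x, φ x = a * x) :=
  stmt14_general
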